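/- For any smooth divergence-free vector field u on T^2, the integral over T^2 of (u·∇u)·Δu vanishes: (u·∇u, Δu)_{L^2} = 0. -/

import Mathlib

open MeasureTheory Real

noncomputable section

abbrev V2 := ℝ × ℝ

/-- Fundamental domain of the 2-torus `T² = [0,2π)²`. -/
def T2dom : Set V2 := Set.Ioc 0 (2*π) ×ˢ Set.Ioc 0 (2*π)

/-- Periodicity with period `2π` in each coordinate. -/
def Per2 {E : Type*} (f : V2 → E) : Prop :=
  ∀ x : V2, f (x.1 + 2*π, x.2) = f x ∧ f (x.1, x.2 + 2*π) = f x

def e1 : V2 := (1, 0)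
def e2 : V2 := (0, 1)

/-- Gradient of a scalar function. -/
def grad (f : V2 → ℝ) (x : V2) : V2 := (fderiv ℝ f x e1, fderiv ℝ f x e2)

def dotR2 (a b : V2) : ℝ := a.1 * b.1 + a.2 * b.2

/-- Divergence of a vector field. -/
def divg (u : V2 → V2) (x : V2) : ℝ :=
  fderiv ℝ (fun p => (u p).1) x e1 + fderiv ℝ (fun p => (u p).2) x e2

def DivFree (u : V2 → V2) : Prop := ∀ x, divg u x = 0

/-- Laplacian of a scalar function. -/
def lap (f : V2 → ℝ) (x : V2) : ℝ :=
  fderiv ℝ (fun p => fderiv ℝ f p e1) x e1 + fderiv ℝ (fun p => fderiv ℝ f p e2) x e2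

/-- Componentwise Laplacian of a vector field. -/
def lapV (u : V2 → V2) (x : V2) : V2 :=
  (lap (fun p => (u p).1) x, lap (fun p => (u p).2) x)

/-- Advection `u · ∇f`. -/
def adv (u : V2 → V2) (f : V2 → ℝ) (x : V2) : ℝ := dotR2 (u x) (grad f x)

/-- Advection of a vector field `u · ∇v`. -/
def advV (u v : V2 → V2) (x : V2) : V2 :=
  (adv u (fun p => (v p).1) x, adv u (fun p => (v p).2) x)

/-- Integral over the torus. -/
def iT2 (f : V2 → ℝ) : ℝ := ∫ x in T2dom, f x

def MeanZero (f : V2 → ℝ) : Prop := iT2 f = 0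
def MeanZeroV (u : V2 → V2) : Prop :=
  iT2 (fun x => (u x).1) = 0 ∧ iT2 (fun x => (u x).2) = 0

/-- `L^p` norm on the torus (scalar). -/
def LpN (p : ℝ) (f : V2 → ℝ) : ℝ := (∫ x in T2dom, |f x| ^ p) ^ (1/p)

/-- `L^p` norm on the torus (vector). -/
def LpNV (p : ℝ) (u : V2 → V2) : ℝ := (∫ x in T2dom, ‖u x‖ ^ p) ^ (1/p)

/-- `L²` norm of the gradient of a scalar function. -/
def L2grad (f : V2 → ℝ) : ℝ := LpNV 2 (grad f)

/-- `L²` norm of the full gradient of a vector field. -/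
def L2gradV (u : V2 → V2) : ℝ :=
  (∫ x in T2dom,
    (‖grad (fun p => (u p).1) x‖^2 + ‖grad (fun p => (u p).2) x‖^2)) ^ (1/(2:ℝ))

/-- `L^∞` norm of a vector field. -/
def LinfV (u : V2 → V2) : ℝ := ⨆ x : V2, ‖u x‖

/- Fourier analysis on the torus -/

def fNorm (k : ℤ × ℤ) : ℝ := Real.sqrt ((k.1:ℝ)^2 + (k.2:ℝ)^2)

/-- Fourier characters `e^{i k · x}`. -/
def eK (k : ℤ × ℤ) (x : V2) : ℂ :=
  Complex.exp (Complex.I * ((k.1 : ℂ) * (x.1 : ℂ) + (k.2 : ℂ) * (x.2 : ℂ)))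

/-- Fourier coefficient of a (real-valued) function on the torus. -/
def fc (f : V2 → ℝ) (k : ℤ × ℤ) : ℂ :=
  (1 / (2*π)^2 : ℂ) * ∫ x in T2dom, (f x : ℂ) * eK (-k) x

/-- Fractional Laplacian `Λ^s = (-Δ)^{s/2}`, Fourier multiplier `|k|^s` on mean-zero part. -/
def lamOp (s : ℝ) (f : V2 → ℝ) (x : V2) : ℝ :=
  (∑' k : ℤ × ℤ, (if k = 0 then 0 else ((fNorm k ^ s : ℝ) : ℂ) * fc f k) * eK k x).re

/-- Periodic Riesz transform `R_j`, Fourier multiplier `i k_j/|k|`. -/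
def rieszOp (j : Fin 2) (f : V2 → ℝ) (x : V2) : ℝ :=
  (∑' k : ℤ × ℤ, (if k = 0 then 0 else
      Complex.I * ((((if j = 0 then (k.1:ℝ) else (k.2:ℝ)) / fNorm k : ℝ)) : ℂ) * fc f k)
      * eK k x).re

/-- The Riesz transform vector `R = ∇Λ^{-1}`. -/
def rieszVec (f : V2 → ℝ) (x : V2) : V2 := (rieszOp 0 f x, rieszOp 1 f x)

/-- Componentwise fractional Laplacian of a vector field. -/
def lamOpV (s : ℝ) (u : V2 → V2) (x : V2) : V2 :=
  (lamOp s (fun p => (u p).1) x, lamOp s (fun p => (u p).2) x)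

/-- Projection onto Fourier modes with Laplacian eigenvalue `|k|² ≥ lam0`. -/
def highProj (lam0 : ℝ) (f : V2 → ℝ) (x : V2) : ℝ :=
  (∑' k : ℤ × ℤ, (if lam0 ≤ fNorm k ^ 2 then fc f k else 0) * eK k x).re

def highProjV (lam0 : ℝ) (u : V2 → V2) (x : V2) : V2 :=
  (highProj lam0 (fun p => (u p).1) x, highProj lam0 (fun p => (u p).2) x)

/- ===== auxiliary machinery ===== -/

def pd (v : V2) (f : V2 → ℝ) : V2 → ℝ := fun x => fderiv ℝ f x v

lemma pd_eq (v : V2) (f : V2 → ℝ) : pd v f = fun x => fderiv ℝ f x v := rfl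

lemma contDiff_pd {f : V2 → ℝ} (hf : ContDiff ℝ (⊤ : ℕ∞) f) (v : V2) :
    ContDiff ℝ (⊤ : ℕ∞) (pd v f) :=
  (hf.fderiv_right (by simp)).clm_apply contDiff_const

lemma pd_add (v : V2) {f g : V2 → ℝ} {x : V2} (hf : DifferentiableAt ℝ f x)
    (hg : DifferentiableAt ℝ g x) :
    pd v (fun y => f y + g y) x = pd v f x + pd v g x := by
  simp [pd_eq, fderiv_fun_add hf hg]

lemma pd_sub (v : V2) {f g : V2 → ℝ} {x : V2} (hf : DifferentiableAt ℝ f x)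
    (hg : DifferentiableAt ℝ g x) :
    pd v (fun y => f y - g y) x = pd v f x - pd v g x := by
  simp [pd_eq, fderiv_fun_sub hf hg]

lemma pd_mul (v : V2) {f g : V2 → ℝ} {x : V2} (hf : DifferentiableAt ℝ f x)
    (hg : DifferentiableAt ℝ g x) :
    pd v (fun y => f y * g y) x = f x * pd v g x + g x * pd v f x := by
  simp [pd_eq, fderiv_fun_mul hf hg]

lemma pd_const (v : V2) (c : ℝ) (x : V2) : pd v (fun _ => c) x = 0 := by
  simp [pd_eq]

lemma pd_const_mul (v : V2) (c : ℝ) {f : V2 → ℝ} {x : V2} (hf : DifferentiableAt ℝ f x) :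
    pd v (fun y => c * f y) x = c * pd v f x := by
  simp [pd_eq, fderiv_const_mul hf]

lemma schwarz {f : V2 → ℝ} (hf : ContDiff ℝ (⊤ : ℕ∞) f) (v w : V2) (x : V2) :
    pd v (pd w f) x = pd w (pd v f) x := by
  have hsymm : IsSymmSndFDerivAt ℝ f x := hf.contDiffAt.isSymmSndFDerivAt (by
    rw [minSmoothness_of_isRCLikeNormedField]; exact WithTop.coe_le_coe.mpr le_top)
  have hd : DifferentiableAt ℝ (fderiv ℝ f) x :=
    ((hf.fderiv_right (m := (⊤ : ℕ∞)) (by simp)).differentiable (by simp)).differentiableAt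
  have h1 : ∀ a : V2, pd a (pd w f) x = fderiv ℝ (fderiv ℝ f) x a w := by
    intro a
    simp only [pd_eq]
    rw [fderiv_clm_apply hd (differentiableAt_const w)]
    simp
  have h2 : ∀ a : V2, pd a (pd v f) x = fderiv ℝ (fderiv ℝ f) x a v := by
    intro a
    simp only [pd_eq]
    rw [fderiv_clm_apply hd (differentiableAt_const v)]
    simp
  rw [h1 v, h2 w, hsymm v w]

lemma fderiv_shift {f : V2 → ℝ} (hf : Differentiable ℝ f) (c : V2)
    (hper : ∀ x, f (x + c) = f x) (x : V2) : fderiv ℝ f (x + c) = fderiv ℝ f x := by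
  have h1 : HasFDerivAt (fun y : V2 => y + c) (ContinuousLinearMap.id ℝ V2) x :=
    (hasFDerivAt_id x).add_const c
  have h2 : HasFDerivAt (fun y => f (y + c))
      ((fderiv ℝ f (x + c)).comp (ContinuousLinearMap.id ℝ V2)) x :=
    (hf (x + c)).hasFDerivAt.comp x h1
  have h3 : HasFDerivAt f (fderiv ℝ f (x + c)) x := by
    simpa [funext hper] using h2
  exact h3.fderiv.symm ▸ rfl

lemma shift1 {E : Type*} {f : V2 → E} (hper : Per2 f) (x : V2) :
    f (x + ((2*π : ℝ), (0:ℝ))) = f x := by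
  have h : x + ((2*π : ℝ), (0:ℝ)) = (x.1 + 2*π, x.2) := by ext <;> simp
  rw [h]; exact (hper x).1

lemma shift2 {E : Type*} {f : V2 → E} (hper : Per2 f) (x : V2) :
    f (x + ((0:ℝ), (2*π : ℝ))) = f x := by
  have h : x + ((0:ℝ), (2*π : ℝ)) = (x.1, x.2 + 2*π) := by ext <;> simp
  rw [h]; exact (hper x).2

lemma pd_per {f : V2 → ℝ} (hf : ContDiff ℝ (⊤ : ℕ∞) f) (hper : Per2 f) (v : V2) :
    Per2 (pd v f) := by
  intro x
  constructor
  · have h := fderiv_shift (hf.differentiable (by simp)) ((2*π : ℝ), (0:ℝ)) (shift1 hper) x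
    have hx : ((x.1 + 2*π, x.2) : V2) = x + ((2*π : ℝ), (0:ℝ)) := by ext <;> simp
    simp only [pd_eq, hx, h]
  · have h := fderiv_shift (hf.differentiable (by simp)) ((0:ℝ), (2*π : ℝ)) (shift2 hper) x
    have hx : ((x.1, x.2 + 2*π) : V2) = x + ((0:ℝ), (2*π : ℝ)) := by ext <;> simp
    simp only [pd_eq, hx, h]

set_option maxHeartbeats 1000000 in
lemma integral_div_zero {f g : V2 → ℝ} (hf : ContDiff ℝ (⊤ : ℕ∞) f) (hg : ContDiff ℝ (⊤ : ℕ∞) g)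
    (hfp : Per2 f) (hgp : Per2 g) :
    (∫ x in T2dom, (pd e1 f x + pd e2 g x)) = 0 := by
  have h2π : (0:ℝ) ≤ 2*π := by positivity
  have hcont : Continuous fun x : V2 => fderiv ℝ f x (1,0) + fderiv ℝ g x (0,1) :=
    ((contDiff_pd hf e1).continuous.add (contDiff_pd hg e2).continuous)
  have hIcc : IntegrableOn (fun x : V2 => fderiv ℝ f x (1,0) + fderiv ℝ g x (0,1))
      (Set.uIcc 0 (2*π) ×ˢ Set.uIcc 0 (2*π)) :=
    hcont.continuousOn.integrableOn_compact (isCompact_uIcc.prod isCompact_uIcc)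
  have key := integral2_divergence_prod_of_hasFDerivAt_off_countable f g
      (fderiv ℝ f) (fderiv ℝ g) 0 0 (2*π) (2*π) ∅ Set.countable_empty
      hf.continuous.continuousOn hg.continuous.continuousOn
      (fun x _ => (hf.differentiable (by simp) x).hasFDerivAt)
      (fun x _ => (hg.differentiable (by simp) x).hasFDerivAt)
      hIcc
  have hg2 : ∀ x : ℝ, g (x, 2*π) = g (x, 0) := fun x => by
    simpa using (hgp (x, 0)).2
  have hf2 : ∀ y : ℝ, f (2*π, y) = f (0, y) := fun y => by
    simpa using (hfp (0, y)).1
  simp only [hg2, hf2] at key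
  have key0 : (∫ x in (0:ℝ)..(2*π), ∫ y in (0:ℝ)..(2*π),
      (fderiv ℝ f (x, y) (1,0) + fderiv ℝ g (x, y) (0,1))) = 0 := by
    rw [key]; ring
  have hsub : Set.Ioc (0:ℝ) (2*π) ×ˢ Set.Ioc (0:ℝ) (2*π) ⊆
      Set.uIcc (0:ℝ) (2*π) ×ˢ Set.uIcc (0:ℝ) (2*π) := by
    apply Set.prod_mono <;> rw [Set.uIcc_of_le h2π] <;> exact Set.Ioc_subset_Icc_self
  have hint : IntegrableOn (fun x : V2 => fderiv ℝ f x (1,0) + fderiv ℝ g x (0,1))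
      (Set.Ioc (0:ℝ) (2*π) ×ˢ Set.Ioc (0:ℝ) (2*π)) := hIcc.mono_set hsub
  have hprod : (∫ x in T2dom, (pd e1 f x + pd e2 g x)) =
      ∫ x in Set.Ioc (0:ℝ) (2*π), ∫ y in Set.Ioc (0:ℝ) (2*π),
        (fderiv ℝ f (x, y) (1,0) + fderiv ℝ g (x, y) (0,1)) := by
    rw [show T2dom = Set.Ioc (0:ℝ) (2*π) ×ˢ Set.Ioc (0:ℝ) (2*π) from rfl]
    rw [Measure.volume_eq_prod] at hint ⊢
    exact setIntegral_prod _ hint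
  rw [hprod]
  calc (∫ x in Set.Ioc (0:ℝ) (2*π), ∫ y in Set.Ioc (0:ℝ) (2*π),
        (fderiv ℝ f (x, y) (1,0) + fderiv ℝ g (x, y) (0,1)))
      = ∫ x in (0:ℝ)..(2*π), ∫ y in Set.Ioc (0:ℝ) (2*π),
        (fderiv ℝ f (x, y) (1,0) + fderiv ℝ g (x, y) (0,1)) :=
        (intervalIntegral.integral_of_le h2π).symm
    _ = ∫ x in (0:ℝ)..(2*π), ∫ y in (0:ℝ)..(2*π),
        (fderiv ℝ f (x, y) (1,0) + fderiv ℝ g (x, y) (0,1)) := by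
        apply intervalIntegral.integral_congr
        intro x _
        exact (intervalIntegral.integral_of_le h2π).symm
    _ = 0 := key0

/-- The flux field, first component. -/
def FF1 (A B : V2 → ℝ) : V2 → ℝ := fun x =>
  (A x * pd e1 A x + B x * pd e2 A x) * pd e1 A x
  + (A x * pd e1 B x + B x * pd e2 B x) * pd e1 B x
  - (1/2) * (A x * (pd e1 A x * pd e1 A x + pd e2 A x * pd e2 A x
      + pd e1 B x * pd e1 B x + pd e2 B x * pd e2 B x))

/-- The flux field, second component. -/
def FF2 (A B : V2 → ℝ) : V2 → ℝ := fun x =>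
  (A x * pd e1 A x + B x * pd e2 A x) * pd e2 A x
  + (A x * pd e1 B x + B x * pd e2 B x) * pd e2 B x
  - (1/2) * (B x * (pd e1 A x * pd e1 A x + pd e2 A x * pd e2 A x
      + pd e1 B x * pd e1 B x + pd e2 B x * pd e2 B x))

lemma contDiff_FF1 {A B : V2 → ℝ} (hA : ContDiff ℝ (⊤ : ℕ∞) A) (hB : ContDiff ℝ (⊤ : ℕ∞) B) :
    ContDiff ℝ (⊤ : ℕ∞) (FF1 A B) := by
  have hA1 := contDiff_pd hA e1; have hA2 := contDiff_pd hA e2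
  have hB1 := contDiff_pd hB e1; have hB2 := contDiff_pd hB e2
  unfold FF1
  exact ((((hA.mul hA1).add (hB.mul hA2)).mul hA1).add
    (((hA.mul hB1).add (hB.mul hB2)).mul hB1)).sub
    (contDiff_const.mul (hA.mul ((((hA1.mul hA1).add (hA2.mul hA2)).add
      (hB1.mul hB1)).add (hB2.mul hB2))))

lemma contDiff_FF2 {A B : V2 → ℝ} (hA : ContDiff ℝ (⊤ : ℕ∞) A) (hB : ContDiff ℝ (⊤ : ℕ∞) B) :
    ContDiff ℝ (⊤ : ℕ∞) (FF2 A B) := by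
  have hA1 := contDiff_pd hA e1; have hA2 := contDiff_pd hA e2
  have hB1 := contDiff_pd hB e1; have hB2 := contDiff_pd hB e2
  unfold FF2
  exact ((((hA.mul hA1).add (hB.mul hA2)).mul hA2).add
    (((hA.mul hB1).add (hB.mul hB2)).mul hB2)).sub
    (contDiff_const.mul (hB.mul ((((hA1.mul hA1).add (hA2.mul hA2)).add
      (hB1.mul hB1)).add (hB2.mul hB2))))

lemma per_FF1 {A B : V2 → ℝ} (hA : ContDiff ℝ (⊤ : ℕ∞) A) (hB : ContDiff ℝ (⊤ : ℕ∞) B)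
    (hPA : Per2 A) (hPB : Per2 B) : Per2 (FF1 A B) := by
  intro x
  constructor
  · simp only [FF1]
    rw [(hPA x).1, (hPB x).1, (pd_per hA hPA e1 x).1, (pd_per hA hPA e2 x).1,
      (pd_per hB hPB e1 x).1, (pd_per hB hPB e2 x).1]
  · simp only [FF1]
    rw [(hPA x).2, (hPB x).2, (pd_per hA hPA e1 x).2, (pd_per hA hPA e2 x).2,
      (pd_per hB hPB e1 x).2, (pd_per hB hPB e2 x).2]

lemma per_FF2 {A B : V2 → ℝ} (hA : ContDiff ℝ (⊤ : ℕ∞) A) (hB : ContDiff ℝ (⊤ : ℕ∞) B)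
    (hPA : Per2 A) (hPB : Per2 B) : Per2 (FF2 A B) := by
  intro x
  constructor
  · simp only [FF2]
    rw [(hPA x).1, (hPB x).1, (pd_per hA hPA e1 x).1, (pd_per hA hPA e2 x).1,
      (pd_per hB hPB e1 x).1, (pd_per hB hPB e2 x).1]
  · simp only [FF2]
    rw [(hPA x).2, (hPB x).2, (pd_per hA hPA e1 x).2, (pd_per hA hPA e2 x).2,
      (pd_per hB hPB e1 x).2, (pd_per hB hPB e2 x).2]

set_option maxHeartbeats 2000000 in
lemma pointwise_identity {A B : V2 → ℝ} (hA : ContDiff ℝ (⊤ : ℕ∞) A) (hB : ContDiff ℝ (⊤ : ℕ∞) B)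
    (hdiv : ∀ y, pd e1 A y + pd e2 B y = 0) (x : V2) :
    (A x * pd e1 A x + B x * pd e2 A x) * (pd e1 (pd e1 A) x + pd e2 (pd e2 A) x)
    + (A x * pd e1 B x + B x * pd e2 B x) * (pd e1 (pd e1 B) x + pd e2 (pd e2 B) x)
    = pd e1 (FF1 A B) x + pd e2 (FF2 A B) x := by
  have hA1 := contDiff_pd hA e1; have hA2 := contDiff_pd hA e2
  have hB1 := contDiff_pd hB e1; have hB2 := contDiff_pd hB e2
  have dA : Differentiable ℝ A := hA.differentiable (by simp)
  have dB : Differentiable ℝ B := hB.differentiable (by simp)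
  have dA1 : Differentiable ℝ (pd e1 A) := hA1.differentiable (by simp)
  have dA2 : Differentiable ℝ (pd e2 A) := hA2.differentiable (by simp)
  have dB1 : Differentiable ℝ (pd e1 B) := hB1.differentiable (by simp)
  have dB2 : Differentiable ℝ (pd e2 B) := hB2.differentiable (by simp)
  have sA : pd e1 (pd e2 A) x = pd e2 (pd e1 A) x := schwarz hA e1 e2 x
  have sB : pd e1 (pd e2 B) x = pd e2 (pd e1 B) x := schwarz hB e1 e2 x
  have hdfun : (fun y => pd e1 A y + pd e2 B y) = fun _ => (0:ℝ) := funext hdiv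
  have c1 : pd e1 (pd e1 A) x + pd e1 (pd e2 B) x = 0 := by
    have h : pd e1 (fun y => pd e1 A y + pd e2 B y) x = 0 := by
      rw [hdfun]; simp [pd_eq]
    rwa [pd_add e1 ((hA1.differentiable (by simp)).differentiableAt)
      ((hB2.differentiable (by simp)).differentiableAt)] at h
  have c2 : pd e2 (pd e1 A) x + pd e2 (pd e2 B) x = 0 := by
    have h : pd e2 (fun y => pd e1 A y + pd e2 B y) x = 0 := by
      rw [hdfun]; simp [pd_eq]
    rwa [pd_add e2 ((hA1.differentiable (by simp)).differentiableAt)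
      ((hB2.differentiable (by simp)).differentiableAt)] at h
  have c0 : pd e2 B x = - pd e1 A x := by have := hdiv x; linarith
  have c1' : pd e2 (pd e1 B) x = - pd e1 (pd e1 A) x := by rw [← sB]; linarith
  have c2' : pd e2 (pd e2 B) x = - pd e2 (pd e1 A) x := by linarith
  delta FF1 FF2
  simp (disch := fun_prop) only [pd_sub, pd_add, pd_mul, pd_const_mul, pd_const]
  rw [sA, sB, c0, c1', c2']
  ring


/-- For any smooth divergence-free `u` on `T²`, `(u·∇u, Δu)_{L²} = 0`. -/
theorem stmt2 (u : V2 → V2)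
    (hu : ContDiff ℝ (⊤ : ℕ∞) u) (hup : Per2 u) (hdiv : DivFree u) :
    iT2 (fun x => dotR2 (advV u u x) (lapV u x)) = 0 := by
  have hA : ContDiff ℝ (⊤ : ℕ∞) (fun p => (u p).1) := hu.fst
  have hB : ContDiff ℝ (⊤ : ℕ∞) (fun p => (u p).2) := hu.snd
  have hPA : Per2 (fun p => (u p).1) := fun x =>
    ⟨congrArg Prod.fst (hup x).1, congrArg Prod.fst (hup x).2⟩
  have hPB : Per2 (fun p => (u p).2) := fun x =>
    ⟨congrArg Prod.snd (hup x).1, congrArg Prod.snd (hup x).2⟩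
  have hdiv' : ∀ y, pd e1 (fun p => (u p).1) y + pd e2 (fun p => (u p).2) y = 0 :=
    fun y => hdiv y
  have hfun : (fun x => dotR2 (advV u u x) (lapV u x))
      = fun x => pd e1 (FF1 (fun p => (u p).1) (fun p => (u p).2)) x
        + pd e2 (FF2 (fun p => (u p).1) (fun p => (u p).2)) x := by
    funext x
    have hpt := pointwise_identity hA hB hdiv' x
    simp only [pd_eq] at hpt
    simp only [dotR2, advV, adv, grad, lapV, lap, pd_eq]
    linear_combination hpt
  unfold iT2
  rw [hfun]
  exact integral_div_zero (contDiff_FF1 hA hB) (contDiff_FF2 hA hB)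
    (per_FF1 hA hB hPA hPB) (per_FF2 hA hB hPA hPB)
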